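/- (Tensor truncation beats matrix truncation.) Given matrices D_1,…,D_ℓ ∈ Matrix (Fin m) (Fin n) ℂ, form the matrix 𝐀 : Matrix (Fin m × Fin n) (Fin ℓ) ℂ with 𝐀 (a,i) j = (D j) a i and the m×ℓ×n tensor A with (A i) a j = (D j) a i. Let M = c • W with c ∈ ℂ, c ≠ 0 and W ∈ Matrix.unitaryGroup (Fin n) ℂ, let A = U ⋆_M S ⋆_M Vᴴ be a t-SVDM of A, let k ≤ min(m,ℓ), and let A_k be the t-rank-k truncation. Then for every matrix B : Matrix (Fin m × Fin n) (Fin ℓ) ℂ with rank B ≤ k, one has ‖A − A_k‖_F ≤ ‖𝐀 − B‖_F, where the right-hand norm is the matrix Frobenius norm. -/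

import Mathlib

open scoped BigOperators ComplexConjugate Matrix

noncomputable section

variable {R : Type*}

/-- Mode-3 product of a third-order tensor (encoded by its frontal slices)
with a transform matrix: `(A ×₃ M) i = ∑ j, (M i j) • (A j)`. -/
def mode3 [RCLike R] {ι α β : Type*} [Fintype ι]
    (A : ι → Matrix α β R) (M : Matrix ι ι R) : ι → Matrix α β R :=
  fun i => ∑ j, M i j • A j

/-- Frobenius (entrywise ℓ²) norm of a matrix. -/
def fnorm [RCLike R] {α β : Type*} [Fintype α] [Fintype β] (A : Matrix α β R) : ℝ :=
  Real.sqrt (∑ a, ∑ b, ‖A a b‖ ^ 2)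

/-- Frobenius norm of a tensor: `‖A‖² = ∑ i, ‖A i‖²`. -/
def tnorm [RCLike R] {ι α β : Type*} [Fintype ι] [Fintype α] [Fintype β]
    (A : ι → Matrix α β R) : ℝ :=
  Real.sqrt (∑ i, fnorm (A i) ^ 2)

/-- The ⋆_M product: facewise product in the transform domain, then inverse transform. -/
def tprodM [RCLike R] {ι m p q : Type*} [Fintype ι] [DecidableEq ι] [Fintype p]
    (M : Matrix ι ι R) (A : ι → Matrix m p R) (B : ι → Matrix p q R) :
    ι → Matrix m q R :=
  mode3 (fun i => mode3 A M i * mode3 B M i) M⁻¹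

/-- Conjugate transpose of a tensor under ⋆_M. -/
def tconj [RCLike R] {ι m p : Type*} [Fintype ι] [DecidableEq ι]
    (M : Matrix ι ι R) (A : ι → Matrix m p R) : ι → Matrix p m R :=
  mode3 (fun i => (mode3 A M i)ᴴ) M⁻¹

/-- The identity tensor under ⋆_M. -/
def tId [RCLike R] (m : Type*) [DecidableEq m] {ι : Type*} [Fintype ι] [DecidableEq ι]
    (M : Matrix ι ι R) : ι → Matrix m m R :=
  mode3 (fun _ => (1 : Matrix m m R)) M⁻¹

/-- A square tensor `Q` is ⋆_M-unitary if `Qᴴ ⋆_M Q = Q ⋆_M Qᴴ = I`. -/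
def tUnitary [RCLike R] {ι m : Type*} [Fintype ι] [DecidableEq ι] [Fintype m] [DecidableEq m]
    (M : Matrix ι ι R) (Q : ι → Matrix m m R) : Prop :=
  tprodM M (tconj M Q) Q = tId m M ∧ tprodM M Q (tconj M Q) = tId m M

/-- A t-SVDM of `A`: a factorization `A = U ⋆_M S ⋆_M Vᴴ` with `U`, `V` ⋆_M-unitary and every
transform-domain slice `Ŝ i` diagonal with real, nonnegative, nonincreasing diagonal entries. -/
def IsTSVDM [RCLike R] {m p n : ℕ} (M : Matrix (Fin n) (Fin n) R)
    (A : Fin n → Matrix (Fin m) (Fin p) R)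
    (U : Fin n → Matrix (Fin m) (Fin m) R)
    (S : Fin n → Matrix (Fin m) (Fin p) R)
    (V : Fin n → Matrix (Fin p) (Fin p) R) : Prop :=
  A = tprodM M (tprodM M U S) (tconj M V) ∧
  tUnitary M U ∧ tUnitary M V ∧
  (∀ (i : Fin n) (a : Fin m) (b : Fin p), (a : ℕ) ≠ (b : ℕ) → mode3 S M i a b = 0) ∧
  (∀ (i : Fin n) (a : Fin m) (b : Fin p), (a : ℕ) = (b : ℕ) →
      ∃ r : ℝ, 0 ≤ r ∧ mode3 S M i a b = (r : R)) ∧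
  (∀ (i : Fin n) (a a' : Fin m) (b b' : Fin p), (a : ℕ) = (b : ℕ) → (a' : ℕ) = (b' : ℕ) →
      (a : ℕ) ≤ (a' : ℕ) →
      RCLike.re (mode3 S M i a' b') ≤ RCLike.re (mode3 S M i a b))

/-- Transform-domain slice of a truncation:
(first k columns of Û) * (leading k×k block of Ŝ) * (first k columns of V̂)ᴴ. -/
def truncSlice [RCLike R] {m p : ℕ} (k : ℕ) (Uh : Matrix (Fin m) (Fin m) R)
    (Sh : Matrix (Fin m) (Fin p) R) (Vh : Matrix (Fin p) (Fin p) R) :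
    Matrix (Fin m) (Fin p) R :=
  Matrix.of fun a b =>
    ∑ j : Fin m, ∑ l : Fin p,
      if (j : ℕ) < k ∧ (l : ℕ) < k then Uh a j * Sh j l * star (Vh b l) else 0

/-- The multi-rank-ρ truncation of a t-SVDM (use `ρ = fun _ => k` for the t-rank-k truncation). -/
def truncTensor [RCLike R] {m p n : ℕ} (M : Matrix (Fin n) (Fin n) R)
    (U : Fin n → Matrix (Fin m) (Fin m) R) (S : Fin n → Matrix (Fin m) (Fin p) R)
    (V : Fin n → Matrix (Fin p) (Fin p) R) (ρ : Fin n → ℕ) :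
    Fin n → Matrix (Fin m) (Fin p) R :=
  mode3 (fun i => truncSlice (ρ i) (mode3 U M i) (mode3 S M i) (mode3 V M i)) M⁻¹

/-- The permuted tensor `Aᴾ`: `(Aᴾ c) i j = (A i) c j`. -/
def tperm [RCLike R] {m p n : ℕ} (A : Fin n → Matrix (Fin m) (Fin p) R) :
    Fin m → Matrix (Fin n) (Fin p) R :=
  fun c => Matrix.of fun i j => A i c j

/-!
The transform `X ↦ X ×₃ (c • W)` multiplies the tensor Frobenius norm by `‖c‖`, so both errors can
be compared in the transform domain, slice by slice. There the t-rank-`k` truncation is the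
truncated SVD of each slice `Â i`, while the transform slices of the folded competitor `B` are
linear combinations of row blocks of `B`, hence of rank at most `k`. Each slice is then handled by
the Eckart–Young inequality in Frobenius norm: if `f₁, …, f_N` is an orthonormal basis of
`ker C` (so `N ≥ p - k`), Bessel's inequality gives
`‖Σ - C‖² ≥ ∑ᵣ ‖Σ fᵣ‖² = ∑ₗ σₗ² tₗ` with `tₗ = ∑ᵣ |fᵣ l|² ∈ [0, 1]` and `∑ₗ tₗ = N`,
and since `σ` is nonincreasing such a weighted sum is at least the tail `∑_{l ≥ k} σₗ²`.
-/

open Matrix Module WithLp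

variable [RCLike R]

section Mode3

variable {ι α β γ : Type*} [Fintype ι]

lemma mode3_apply (A : ι → Matrix α β R) (M : Matrix ι ι R) (i : ι) (a : α) (b : β) :
    mode3 A M i a b = ∑ j, M i j * A j a b := by
  simp [mode3, Matrix.sum_apply]

lemma mode3_sub (A B : ι → Matrix α β R) (M : Matrix ι ι R) :
    mode3 (A - B) M = mode3 A M - mode3 B M := by
  funext i
  simp [mode3, smul_sub, Finset.sum_sub_distrib]

lemma mode3_mode3 (A : ι → Matrix α β R) (M N : Matrix ι ι R) :
    mode3 (mode3 A M) N = mode3 A (N * M) := by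
  funext i
  ext a b
  simp only [mode3_apply, mul_apply, Finset.sum_mul, Finset.mul_sum, mul_assoc]
  exact Finset.sum_comm

variable [DecidableEq ι]

lemma mode3_one (A : ι → Matrix α β R) : mode3 A 1 = A := by
  funext i
  ext a b
  simp [mode3_apply, one_apply]

variable {M : Matrix ι ι R}

lemma mode3_mode3_inv (hM : IsUnit M.det) (A : ι → Matrix α β R) :
    mode3 (mode3 A M⁻¹) M = A := by
  rw [mode3_mode3, mul_nonsing_inv M hM, mode3_one]

lemma mode3_tconj (hM : IsUnit M.det) (A : ι → Matrix α β R) :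
    mode3 (tconj M A) M = fun i => (mode3 A M i)ᴴ :=
  mode3_mode3_inv hM _

lemma mode3_tId [DecidableEq β] (hM : IsUnit M.det) : mode3 (tId β M) M = 1 :=
  mode3_mode3_inv hM _

variable [Fintype β]

lemma mode3_tprodM (hM : IsUnit M.det) (A : ι → Matrix α β R) (B : ι → Matrix β γ R) :
    mode3 (tprodM M A B) M = fun i => mode3 A M i * mode3 B M i :=
  mode3_mode3_inv hM _

lemma tUnitary.mode3_mem_unitaryGroup [DecidableEq β] {Q : ι → Matrix β β R}
    (hM : IsUnit M.det) (hQ : tUnitary M Q) (i : ι) : mode3 Q M i ∈ unitaryGroup β R := by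
  have := congrFun (congrArg (mode3 · M) hQ.1) i
  simp only [mode3_tprodM hM, mode3_tconj hM, mode3_tId hM] at this
  exact mem_unitaryGroup_iff'.mpr this

end Mode3

section Frobenius

variable {ι α β : Type*} [Fintype ι] [Fintype α] [Fintype β]

lemma fnorm_nonneg (A : Matrix α β R) : 0 ≤ fnorm A := Real.sqrt_nonneg _

lemma tnorm_nonneg (A : ι → Matrix α β R) : 0 ≤ tnorm A := Real.sqrt_nonneg _

lemma fnorm_sq (A : Matrix α β R) : fnorm A ^ 2 = ∑ a, ∑ b, ‖A a b‖ ^ 2 :=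
  Real.sq_sqrt (by positivity)

lemma tnorm_sq (A : ι → Matrix α β R) :
    tnorm A ^ 2 = ∑ i, ∑ a, ∑ b, ‖A i a b‖ ^ 2 := by
  simp only [tnorm, fnorm_sq]
  exact Real.sq_sqrt (by positivity)

lemma fnorm_conjTranspose (A : Matrix α β R) : fnorm Aᴴ = fnorm A := by
  simp only [fnorm, conjTranspose_apply, norm_star]
  rw [Finset.sum_comm]

lemma fnorm_smul (c : R) (A : Matrix α β R) : fnorm (c • A) = ‖c‖ * fnorm A := by
  simp only [fnorm, Matrix.smul_apply, smul_eq_mul, norm_mul, mul_pow, ← Finset.mul_sum]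
  rw [Real.sqrt_mul (by positivity), Real.sqrt_sq (norm_nonneg c)]

lemma ofReal_fnorm_sq (A : Matrix α β R) : ((fnorm A ^ 2 : ℝ) : R) = trace (Aᴴ * A) := by
  simp only [fnorm_sq, trace, Matrix.diag, mul_apply, conjTranspose_apply, RCLike.star_def,
    RCLike.conj_mul]
  push_cast
  exact Finset.sum_comm

lemma fnorm_unitary_mul [DecidableEq α] {U : Matrix α α R} (hU : U ∈ unitaryGroup α R)
    (A : Matrix α β R) : fnorm (U * A) = fnorm A := by
  have hsq : fnorm (U * A) ^ 2 = fnorm A ^ 2 := by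
    apply RCLike.ofReal_injective (K := R)
    rw [ofReal_fnorm_sq, ofReal_fnorm_sq, conjTranspose_mul, Matrix.mul_assoc,
      ← Matrix.mul_assoc Uᴴ, ← star_eq_conjTranspose, mem_unitaryGroup_iff'.mp hU,
      Matrix.one_mul]
  exact (sq_eq_sq₀ (fnorm_nonneg _) (fnorm_nonneg _)).mp hsq

lemma fnorm_mul_unitary [DecidableEq β] {V : Matrix β β R} (hV : V ∈ unitaryGroup β R)
    (A : Matrix α β R) : fnorm (A * V) = fnorm A := by
  rw [← fnorm_conjTranspose, conjTranspose_mul, ← star_eq_conjTranspose,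
    fnorm_unitary_mul (Unitary.star_mem hV), fnorm_conjTranspose]

lemma tnorm_le_tnorm {A B : ι → Matrix α β R} (h : ∀ i, fnorm (A i) ≤ fnorm (B i)) :
    tnorm A ≤ tnorm B :=
  Real.sqrt_le_sqrt <| Finset.sum_le_sum fun i _ => pow_le_pow_left₀ (fnorm_nonneg _) (h i) 2

end Frobenius

section Unfolding

variable {ι α β : Type*}

def unfold3 (A : ι → Matrix α β R) : Matrix ι (α × β) R :=
  of fun i ab => A i ab.1 ab.2

def fold (E : Matrix (α × ι) β R) : ι → Matrix α β R :=
  fun i => of fun a b => E (a, i) b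

lemma fold_sub (E F : Matrix (α × ι) β R) : fold (E - F) = fold E - fold F := rfl

variable [Fintype ι]

lemma unfold3_mode3 (A : ι → Matrix α β R) (M : Matrix ι ι R) :
    unfold3 (mode3 A M) = M * unfold3 A := by
  ext i ab
  simp [unfold3, mode3_apply, mul_apply]

variable [Fintype α] [Fintype β]

lemma tnorm_eq_fnorm_unfold3 (A : ι → Matrix α β R) : tnorm A = fnorm (unfold3 A) := by
  rw [← Real.sqrt_sq (tnorm_nonneg A), tnorm_sq]
  simp only [fnorm, unfold3, of_apply, Fintype.sum_prod_type]

lemma tnorm_mode3_smul_unitary [DecidableEq ι] {W : Matrix ι ι R} (hW : W ∈ unitaryGroup ι R)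
    (c : R) (A : ι → Matrix α β R) : tnorm (mode3 A (c • W)) = ‖c‖ * tnorm A := by
  rw [tnorm_eq_fnorm_unfold3, tnorm_eq_fnorm_unfold3, unfold3_mode3, Matrix.smul_mul, fnorm_smul,
    fnorm_unitary_mul hW]

lemma tnorm_fold (E : Matrix (α × ι) β R) : tnorm (fold E) = fnorm E := by
  rw [← Real.sqrt_sq (tnorm_nonneg _), tnorm_sq]
  simp only [fnorm, fold, of_apply, Fintype.sum_prod_type]
  rw [Finset.sum_comm]

lemma rank_mode3_fold_le (E : Matrix (α × ι) β R) (M : Matrix ι ι R) (i : ι) :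
    (mode3 (fold E) M i).rank ≤ E.rank := by
  classical
  have : mode3 (fold E) M i =
      (of fun a (a'i' : α × ι) => if a'i'.1 = a then M i a'i'.2 else 0) * E := by
    ext a b
    simp [mode3_apply, fold, mul_apply, Fintype.sum_prod_type]
  rw [this]
  exact rank_mul_le_right _ _

end Unfolding

section Orthonormal

variable {ι α β : Type*} [Fintype ι] [Fintype α] [Fintype β] {f : ι → EuclideanSpace R β}

lemma Orthonormal.sum_sum_norm_mulVec_sq_le (hf : Orthonormal R f) (Y : Matrix α β R) :
    ∑ r, ∑ a, ‖(Y *ᵥ ofLp (f r)) a‖ ^ 2 ≤ fnorm Y ^ 2 := by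
  rw [Finset.sum_comm, fnorm_sq]
  gcongr with a
  have hrow : ‖toLp 2 (star (Y a))‖ ^ 2 = ∑ b, ‖Y a b‖ ^ 2 := by
    simp [EuclideanSpace.norm_sq_eq]
  rw [← hrow]
  refine (Finset.sum_congr rfl fun r _ => ?_).trans_le
    (hf.sum_inner_products_le (toLp 2 (star (Y a))) (s := Finset.univ))
  rw [EuclideanSpace.inner_eq_star_dotProduct, ofLp_toLp, star_dotProduct_star, norm_star,
    dotProduct_comm]
  rfl

lemma Orthonormal.sum_norm_apply_sq_le_one (hf : Orthonormal R f) (l : β) :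
    ∑ r, ‖f r l‖ ^ 2 ≤ 1 := by
  classical
  convert hf.sum_inner_products_le (EuclideanSpace.single l (1 : R)) (s := Finset.univ)
    using 3 with r
  · simp [EuclideanSpace.inner_single_right]
  · simp

lemma Orthonormal.sum_sum_norm_apply_sq (hf : Orthonormal R f) :
    ∑ l, ∑ r, ‖f r l‖ ^ 2 = Fintype.card ι := by
  rw [Finset.sum_comm]
  simp [← EuclideanSpace.norm_sq_eq, hf.1]

lemma exists_orthonormal_mulVec_eq_zero (C : Matrix α β R) :
    ∃ (N : ℕ) (f : Fin N → EuclideanSpace R β), Orthonormal R f ∧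
      (∀ r, C *ᵥ ofLp (f r) = 0) ∧ Fintype.card β ≤ C.rank + N := by
  classical
  let K := LinearMap.ker (toEuclideanLin C)
  let b := stdOrthonormalBasis R K
  refine ⟨finrank R K, fun r => b r, b.orthonormal.comp_linearIsometry K.subtypeₗᵢ,
    fun r => ?_, ?_⟩
  · exact congrArg ofLp (LinearMap.mem_ker.mp (b r).2)
  · have hrank := rank_eq_finrank_range_toLin C (PiLp.basisFun 2 R α) (PiLp.basisFun 2 R β)
    rw [← toLpLin_eq_toLin] at hrank
    have := LinearMap.finrank_range_add_finrank_ker (toEuclideanLin C)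
    rw [finrank_euclideanSpace] at this
    rw [hrank]
    exact this.ge

end Orthonormal

section Inequalities

-- Termwise `(d l - τ) * (t l - 1ₛ l) ≥ 0`; summing and using `#s ≤ ∑ t` gives the claim.
lemma sum_le_sum_mul_of_threshold {ι : Type*} [Fintype ι] (s : Finset ι) {d t : ι → ℝ}
    {τ : ℝ} (hτ : 0 ≤ τ) (hs : ∀ l ∈ s, d l ≤ τ) (hsc : ∀ l ∉ s, τ ≤ d l)
    (ht0 : ∀ l, 0 ≤ t l) (ht1 : ∀ l, t l ≤ 1) (hcard : (s.card : ℝ) ≤ ∑ l, t l) :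
    ∑ l ∈ s, d l ≤ ∑ l, d l * t l := by
  classical
  have termwise : ∀ l,
      τ * (t l - if l ∈ s then 1 else 0) ≤ d l * t l - if l ∈ s then d l else 0 := by
    intro l
    split_ifs with hl
    · nlinarith [hs l hl, ht1 l]
    · nlinarith [hsc l hl, ht0 l]
  have := Finset.sum_le_sum fun l (_ : l ∈ Finset.univ) => termwise l
  simp only [← Finset.mul_sum, Finset.sum_sub_distrib, Finset.sum_ite_mem, Finset.univ_inter,
    Finset.sum_const, nsmul_eq_mul, mul_one] at this
  nlinarith

lemma sum_tail_le_sum_mul_of_antitone {p k : ℕ} {d t : Fin p → ℝ} (hd : Antitone d)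
    (hd0 : ∀ l, 0 ≤ d l) (ht0 : ∀ l, 0 ≤ t l) (ht1 : ∀ l, t l ≤ 1)
    (hsum : ((p - k : ℕ) : ℝ) ≤ ∑ l, t l) :
    ∑ l : Fin p with k ≤ l.val, d l ≤ ∑ l, d l * t l := by
  have hcard : (Finset.univ.filter fun l : Fin p => k ≤ l.val).card = p - k := by
    have := Finset.card_filter_add_card_filter_not (s := Finset.univ) (fun l : Fin p => l.val < k)
    simp only [not_lt, Fin.card_filter_val_lt, Finset.card_univ, Fintype.card_fin] at this
    omega
  by_cases hk : k < p
  · refine sum_le_sum_mul_of_threshold _ (hd0 ⟨k, hk⟩) (fun l hl => hd ?_) (fun l hl => hd ?_)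
      ht0 ht1 (by rwa [hcard])
    · simpa [Fin.le_def] using hl
    · simp only [Finset.mem_filter, Finset.mem_univ, true_and, not_le] at hl
      exact Fin.le_def.mpr hl.le
  · refine sum_le_sum_mul_of_threshold _ le_rfl (fun l hl => ?_) (fun l _ => hd0 l) ht0 ht1
      (by rwa [hcard])
    simp only [Finset.mem_filter, Finset.mem_univ, true_and] at hl
    omega

end Inequalities

section SingularValues

def leadingBlock {m p : ℕ} (k : ℕ) (S : Matrix (Fin m) (Fin p) R) : Matrix (Fin m) (Fin p) R :=
  of fun j l => if (j : ℕ) < k ∧ (l : ℕ) < k then S j l else 0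

lemma truncSlice_eq {m p : ℕ} (k : ℕ) (U : Matrix (Fin m) (Fin m) R)
    (S : Matrix (Fin m) (Fin p) R) (V : Matrix (Fin p) (Fin p) R) :
    truncSlice k U S V = U * leadingBlock k S * Vᴴ := by
  ext a b
  simp only [truncSlice, leadingBlock, of_apply, mul_apply, conjTranspose_apply, Finset.sum_mul,
    mul_ite, mul_zero, ite_mul, zero_mul]
  exact Finset.sum_comm

lemma fnorm_sub_leadingBlock_sq {m p : ℕ} (k : ℕ) {S : Matrix (Fin m) (Fin p) R}
    (hS : ∀ (a : Fin m) (b : Fin p), (a : ℕ) ≠ (b : ℕ) → S a b = 0) :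
    fnorm (S - leadingBlock k S) ^ 2 = ∑ l : Fin p with k ≤ l.val, ∑ a, ‖S a l‖ ^ 2 := by
  rw [fnorm_sq, Finset.sum_comm, Finset.sum_filter]
  refine Finset.sum_congr rfl fun l _ => ?_
  split_ifs with hl
  · refine Finset.sum_congr rfl fun a _ => ?_
    simp [leadingBlock, not_lt.mpr hl]
  · refine Finset.sum_eq_zero fun a _ => ?_
    by_cases ha : (a : ℕ) < k
    · simp [leadingBlock, ha, not_le.mp hl]
    · simp [leadingBlock, ha, hS a l (by omega)]

lemma sum_norm_mulVec_sq_of_diag {m p : ℕ} {S : Matrix (Fin m) (Fin p) R}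
    (hS : ∀ (a : Fin m) (b : Fin p), (a : ℕ) ≠ (b : ℕ) → S a b = 0) (g : Fin p → R) :
    ∑ a, ‖(S *ᵥ g) a‖ ^ 2 = ∑ l, (∑ a, ‖S a l‖ ^ 2) * ‖g l‖ ^ 2 := by
  have hrow : ∀ a, ‖(S *ᵥ g) a‖ ^ 2 = ∑ l, ‖S a l‖ ^ 2 * ‖g l‖ ^ 2 := by
    intro a
    by_cases ha : (a : ℕ) < p
    · have hoff : ∀ l : Fin p, l ≠ ⟨a, ha⟩ → S a l = 0 :=
        fun l hl => hS a l fun h => hl (Fin.ext h.symm)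
      rw [mulVec, dotProduct, Finset.sum_eq_single ⟨a, ha⟩ (fun l _ hl => by simp [hoff l hl])
        (by simp), Finset.sum_eq_single ⟨a, ha⟩ (fun l _ hl => by simp [hoff l hl]) (by simp),
        norm_mul, mul_pow]
    · have hzero : ∀ l, S a l = 0 := fun l => hS a l (by omega)
      simp [mulVec, dotProduct, hzero]
  simp only [hrow, Finset.sum_mul]
  exact Finset.sum_comm

def IsSingularValueMatrix {m p : ℕ} (S : Matrix (Fin m) (Fin p) R) : Prop :=
  (∀ (a : Fin m) (b : Fin p), (a : ℕ) ≠ (b : ℕ) → S a b = 0) ∧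
  (∀ (a : Fin m) (b : Fin p), (a : ℕ) = (b : ℕ) →
      ∃ r : ℝ, 0 ≤ r ∧ S a b = (r : R)) ∧
  (∀ (a a' : Fin m) (b b' : Fin p), (a : ℕ) = (b : ℕ) → (a' : ℕ) = (b' : ℕ) →
      (a : ℕ) ≤ (a' : ℕ) → RCLike.re (S a' b') ≤ RCLike.re (S a b))

namespace IsSingularValueMatrix

variable {m p : ℕ} {S : Matrix (Fin m) (Fin p) R}

lemma sum_norm_sq_col_eq (hS : IsSingularValueMatrix S) {a : Fin m} {l : Fin p}
    (h : (a : ℕ) = l) :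
    ∑ a', ‖S a' l‖ ^ 2 = ‖S a l‖ ^ 2 :=
  Finset.sum_eq_single a (fun a' _ ha' => by
    rw [hS.1 a' l fun h' => ha' (Fin.ext (h'.trans h.symm)), norm_zero, zero_pow two_ne_zero])
    (by simp)

lemma antitone_sum_norm_sq_col (hS : IsSingularValueMatrix S) :
    Antitone fun l : Fin p => ∑ a, ‖S a l‖ ^ 2 := by
  intro l l' hll
  by_cases h' : (l' : ℕ) < m
  · have h : (l : ℕ) < m := lt_of_le_of_lt hll h'
    dsimp only
    rw [hS.sum_norm_sq_col_eq (a := ⟨l', h'⟩) rfl, hS.sum_norm_sq_col_eq (a := ⟨l, h⟩) rfl]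
    obtain ⟨r, hr0, hr⟩ := hS.2.1 ⟨l, h⟩ l rfl
    obtain ⟨r', hr'0, hr'⟩ := hS.2.1 ⟨l', h'⟩ l' rfl
    have hmono := hS.2.2 ⟨l, h⟩ ⟨l', h'⟩ l l' rfl rfl hll
    rw [hr, hr', RCLike.ofReal_re, RCLike.ofReal_re] at hmono
    rw [hr, hr', RCLike.norm_ofReal, RCLike.norm_ofReal, abs_of_nonneg hr0, abs_of_nonneg hr'0]
    gcongr
  · dsimp only
    rw [Finset.sum_eq_zero fun a _ => by
      rw [hS.1 a l' (by omega), norm_zero, zero_pow two_ne_zero]]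
    positivity

lemma sum_tail_le_fnorm_sub_sq (hS : IsSingularValueMatrix S) {C : Matrix (Fin m) (Fin p) R}
    {k : ℕ} (hC : C.rank ≤ k) :
    ∑ l : Fin p with k ≤ l.val, ∑ a, ‖S a l‖ ^ 2 ≤ fnorm (S - C) ^ 2 := by
  obtain ⟨N, f, hf, hCf, hdim⟩ := exists_orthonormal_mulVec_eq_zero C
  have hsum : ((p - k : ℕ) : ℝ) ≤ ∑ l, ∑ r, ‖f r l‖ ^ 2 := by
    rw [hf.sum_sum_norm_apply_sq, Fintype.card_fin]
    rw [Fintype.card_fin] at hdim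
    exact_mod_cast (by omega : p - k ≤ N)
  calc ∑ l : Fin p with k ≤ l.val, ∑ a, ‖S a l‖ ^ 2
      ≤ ∑ l, (∑ a, ‖S a l‖ ^ 2) * ∑ r, ‖f r l‖ ^ 2 :=
        sum_tail_le_sum_mul_of_antitone hS.antitone_sum_norm_sq_col (fun _ => by positivity)
          (fun _ => by positivity) hf.sum_norm_apply_sq_le_one hsum
    _ = ∑ r, ∑ a, ‖(S *ᵥ ofLp (f r)) a‖ ^ 2 := by
        simp only [sum_norm_mulVec_sq_of_diag hS.1, Finset.mul_sum]
        exact Finset.sum_comm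
    _ = ∑ r, ∑ a, ‖((S - C) *ᵥ ofLp (f r)) a‖ ^ 2 := by
        simp [sub_mulVec, hCf]
    _ ≤ fnorm (S - C) ^ 2 := hf.sum_sum_norm_mulVec_sq_le _

end IsSingularValueMatrix

theorem fnorm_sub_truncSlice_le {m p k : ℕ} {U : Matrix (Fin m) (Fin m) R}
    {S : Matrix (Fin m) (Fin p) R} {V : Matrix (Fin p) (Fin p) R}
    (hU : U ∈ unitaryGroup (Fin m) R) (hV : V ∈ unitaryGroup (Fin p) R)
    (hS : IsSingularValueMatrix S)
    {C : Matrix (Fin m) (Fin p) R} (hC : C.rank ≤ k) :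
    fnorm (U * S * Vᴴ - truncSlice k U S V) ≤ fnorm (U * S * Vᴴ - C) := by
  have hV' : Vᴴ ∈ unitaryGroup (Fin p) R := Unitary.star_mem hV
  have hC' : (Uᴴ * C * V).rank ≤ k :=
    ((rank_mul_le_left _ _).trans (rank_mul_le_right _ _)).trans hC
  have hCU : U * (Uᴴ * C * V) * Vᴴ = C := by
    rw [← star_eq_conjTranspose, ← star_eq_conjTranspose, ← Matrix.mul_assoc,
      ← Matrix.mul_assoc, Unitary.mul_star_self_of_mem hU, Matrix.one_mul, Matrix.mul_assoc,
      Unitary.mul_star_self_of_mem hV, Matrix.mul_one]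
  rw [truncSlice_eq, ← Matrix.sub_mul, ← Matrix.mul_sub, ← hCU, ← Matrix.sub_mul,
    ← Matrix.mul_sub, fnorm_mul_unitary hV', fnorm_unitary_mul hU, fnorm_mul_unitary hV',
    fnorm_unitary_mul hU]
  refine (sq_le_sq₀ (fnorm_nonneg _) (fnorm_nonneg _)).mp ?_
  rw [fnorm_sub_leadingBlock_sq k hS.1]
  exact hS.sum_tail_le_fnorm_sub_sq hC'

end SingularValues

namespace IsTSVDM

variable {m p n : ℕ} {A : Fin n → Matrix (Fin m) (Fin p) R}
  {U : Fin n → Matrix (Fin m) (Fin m) R} {S : Fin n → Matrix (Fin m) (Fin p) R}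
  {V : Fin n → Matrix (Fin p) (Fin p) R}

lemma isSingularValueMatrix {M : Matrix (Fin n) (Fin n) R} (h : IsTSVDM M A U S V) (i : Fin n) :
    IsSingularValueMatrix (mode3 S M i) :=
  ⟨h.2.2.2.1 i, h.2.2.2.2.1 i, h.2.2.2.2.2 i⟩

lemma mode3_eq {M : Matrix (Fin n) (Fin n) R} (hM : IsUnit M.det) (h : IsTSVDM M A U S V)
    (i : Fin n) : mode3 A M i = mode3 U M i * mode3 S M i * (mode3 V M i)ᴴ := by
  rw [h.1, mode3_tprodM hM, mode3_tprodM hM, mode3_tconj hM]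

theorem tnorm_sub_truncTensor_le {W : Matrix (Fin n) (Fin n) R}
    (hW : W ∈ unitaryGroup (Fin n) R) {c : R} (hc : c ≠ 0) (h : IsTSVDM (c • W) A U S V)
    (k : ℕ) {B : Fin n → Matrix (Fin m) (Fin p) R}
    (hB : ∀ i, (mode3 B (c • W) i).rank ≤ k) :
    tnorm (A - truncTensor (c • W) U S V (fun _ => k)) ≤ tnorm (A - B) := by
  have hM : IsUnit (c • W).det := by
    refine isUnit_det_of_left_inverse (B := c⁻¹ • star W) ?_
    rw [Matrix.smul_mul, Matrix.mul_smul, smul_smul, inv_mul_cancel₀ hc, one_smul,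
      Unitary.star_mul_self_of_mem hW]
  have hhat :
      tnorm (mode3 A (c • W) - mode3 (truncTensor (c • W) U S V fun _ => k) (c • W)) ≤
        tnorm (mode3 A (c • W) - mode3 B (c • W)) := by
    refine tnorm_le_tnorm fun i => ?_
    rw [Pi.sub_apply, Pi.sub_apply, truncTensor, mode3_mode3_inv hM, h.mode3_eq hM i]
    exact fnorm_sub_truncSlice_le (h.2.1.mode3_mem_unitaryGroup hM i)
      (h.2.2.1.mode3_mem_unitaryGroup hM i) (h.isSingularValueMatrix i) (hB i)
  rw [← mode3_sub, ← mode3_sub, tnorm_mode3_smul_unitary hW, tnorm_mode3_smul_unitary hW]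
    at hhat
  exact le_of_mul_le_mul_left hhat (norm_pos_iff.mpr hc)

end IsTSVDM

theorem stmt10_general {m n ℓ : ℕ} (D : Fin ℓ → Matrix (Fin m) (Fin n) ℂ)
    (W : Matrix (Fin n) (Fin n) ℂ) (hW : W ∈ Matrix.unitaryGroup (Fin n) ℂ)
    (c : ℂ) (hc : c ≠ 0)
    (U : Fin n → Matrix (Fin m) (Fin m) ℂ)
    (S : Fin n → Matrix (Fin m) (Fin ℓ) ℂ)
    (V : Fin n → Matrix (Fin ℓ) (Fin ℓ) ℂ)
    (h : IsTSVDM (c • W) (fun i => Matrix.of fun a j => D j a i) U S V)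
    (k : ℕ)
    (B : Matrix (Fin m × Fin n) (Fin ℓ) ℂ) (hB : Matrix.rank B ≤ k) :
    tnorm (fun i =>
        (Matrix.of fun (a : Fin m) (j : Fin ℓ) => D j a i) -
          truncTensor (c • W) U S V (fun _ => k) i) ≤
      fnorm ((Matrix.of fun (ai : Fin m × Fin n) (j : Fin ℓ) => D j ai.1 ai.2) - B) := by
  have hfold : fold (Matrix.of fun (ai : Fin m × Fin n) (j : Fin ℓ) => D j ai.1 ai.2) =
      fun i => Matrix.of fun a j => D j a i := rfl
  rw [← tnorm_fold, fold_sub, hfold]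
  exact h.tnorm_sub_truncTensor_le hW hc k fun i => (rank_mode3_fold_le B _ i).trans hB

/-- tensor truncation beats matrix truncation: the t-rank-k truncation of the
data tensor approximates the data at least as well as any rank-≤k matrix approximates the
unfolded data matrix. -/
theorem stmt10 {m n ℓ : ℕ} (D : Fin ℓ → Matrix (Fin m) (Fin n) ℂ)
    (W : Matrix (Fin n) (Fin n) ℂ) (hW : W ∈ Matrix.unitaryGroup (Fin n) ℂ)
    (c : ℂ) (hc : c ≠ 0)
    (U : Fin n → Matrix (Fin m) (Fin m) ℂ)
    (S : Fin n → Matrix (Fin m) (Fin ℓ) ℂ)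
    (V : Fin n → Matrix (Fin ℓ) (Fin ℓ) ℂ)
    (h : IsTSVDM (c • W) (fun i => Matrix.of fun a j => D j a i) U S V)
    (k : ℕ) (hk : k ≤ min m ℓ)
    (B : Matrix (Fin m × Fin n) (Fin ℓ) ℂ) (hB : Matrix.rank B ≤ k) :
    tnorm (fun i =>
        (Matrix.of fun (a : Fin m) (j : Fin ℓ) => D j a i) -
          truncTensor (c • W) U S V (fun _ => k) i) ≤
      fnorm ((Matrix.of fun (ai : Fin m × Fin n) (j : Fin ℓ) => D j ai.1 ai.2) - B) :=
  stmt10_general D W hW c hc U S V h k B hB
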